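/- arXiv:1104.0050 — 4 statements merged into one kernel-verified Lean document; each statement's English description precedes it below -/
import Mathlib

section
/- Let n ≥ 1, let U ⊆ ℝⁿ be a nonempty connected open set, and let f : U → ℝ be a smooth function. If f is harmonic on U (its Laplacian vanishes identically on U) and eikonal on U (there is a constant C ≥ 0 with ‖∇f(x)‖ = C for all x ∈ U), then f is affine: there exist a vector a ∈ ℝⁿ with ‖a‖ = C and a constant b ∈ ℝ such that f(x) = ⟨a, x⟩ + b for all x ∈ U. -/
open scoped RealInnerProductSpace

/-- The Laplacian of `f : ℝⁿ → ℝ` at `x`: the trace of the Hessian, i.e. the sum of the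
pure second partial derivatives, computed as the trace of the derivative of the gradient. -/
noncomputable def laplacian {n : ℕ} (f : EuclideanSpace ℝ (Fin n) → ℝ)
    (x : EuclideanSpace ℝ (Fin n)) : ℝ :=
  ∑ i : Fin n, fderiv ℝ (gradient f) x (EuclideanSpace.single i 1) i

set_option maxHeartbeats 1000000

noncomputable def toVec {n : ℕ} :
    (EuclideanSpace ℝ (Fin n) →L[ℝ] ℝ) →L[ℝ] EuclideanSpace ℝ (Fin n) :=
  LinearMap.toContinuousLinearMap
  { toFun := fun L => (InnerProductSpace.toDual ℝ (EuclideanSpace ℝ (Fin n))).symm L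
    map_add' := fun L M => by simp
    map_smul' := fun c L => by simp [starRingEnd_apply] }

lemma toVec_inner {n : ℕ} (L : EuclideanSpace ℝ (Fin n) →L[ℝ] ℝ) (v : EuclideanSpace ℝ (Fin n)) :
    ⟪toVec L, v⟫ = L v := by
  simp only [toVec, LinearMap.coe_toContinuousLinearMap, LinearMap.coe_mk, AddHom.coe_mk]
  exact InnerProductSpace.toDual_symm_apply

lemma grad_eq' {n : ℕ} (f : EuclideanSpace ℝ (Fin n) → ℝ) :
    gradient f = fun y => toVec (fderiv ℝ f y) := rfl

lemma toVec_coord {n : ℕ} (L : EuclideanSpace ℝ (Fin n) →L[ℝ] ℝ) (i : Fin n) :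
    toVec L i = L (EuclideanSpace.single i 1) := by
  have h1 : toVec L i = ⟪EuclideanSpace.single i (1:ℝ), toVec L⟫ := by
    rw [EuclideanSpace.inner_single_left]; simp
  rw [h1, real_inner_comm, toVec_inner]

lemma const_on_of_fderiv_zero {E F : Type*} [NormedAddCommGroup E] [NormedSpace ℝ E]
    [NormedAddCommGroup F] [NormedSpace ℝ F] {U : Set E}
    (hUo : IsOpen U) (hUc : IsPreconnected U) {h : E → F}
    (hdiff : ∀ x ∈ U, DifferentiableAt ℝ h x)
    (hzero : ∀ x ∈ U, fderiv ℝ h x = 0)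
    {x y : E} (hx : x ∈ U) (hy : y ∈ U) : h y = h x := by
  have hball : ∀ z ∈ U, ∃ ε > 0, Metric.ball z ε ⊆ U ∧ ∀ w ∈ Metric.ball z ε, h w = h z := by
    intro z hz
    obtain ⟨ε, εpos, hsub⟩ := Metric.isOpen_iff.1 hUo z hz
    refine ⟨ε, εpos, hsub, fun w hw => ?_⟩
    refine (convex_ball z ε).is_const_of_fderivWithin_eq_zero
      (fun p hp => (hdiff p (hsub hp)).differentiableWithinAt)
      (fun p hp => ?_) hw (Metric.mem_ball_self εpos)
    rw [fderivWithin_of_isOpen Metric.isOpen_ball hp]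
    exact hzero p (hsub hp)
  set V : Set E := {z | z ∈ U ∧ h z = h x} with hV
  set W : Set E := {z | z ∈ U ∧ h z ≠ h x} with hW
  have hVo : IsOpen V := by
    rw [Metric.isOpen_iff]
    rintro z ⟨hzU, hzv⟩
    obtain ⟨ε, εpos, hsub, hconst⟩ := hball z hzU
    exact ⟨ε, εpos, fun w hw => ⟨hsub hw, by rw [hconst w hw, hzv]⟩⟩
  have hWo : IsOpen W := by
    rw [Metric.isOpen_iff]
    rintro z ⟨hzU, hzv⟩
    obtain ⟨ε, εpos, hsub, hconst⟩ := hball z hzU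
    exact ⟨ε, εpos, fun w hw => ⟨hsub hw, by rw [hconst w hw]; exact hzv⟩⟩
  have hsubU : U ⊆ V := by
    refine hUc.subset_left_of_subset_union hVo hWo ?_ ?_ ⟨x, hx, hx, rfl⟩
    · rw [Set.disjoint_left]; rintro z ⟨_, hz⟩ ⟨_, hz'⟩; exact hz' hz
    · intro z hz
      by_cases hc : h z = h x
      · exact Or.inl ⟨hz, hc⟩
      · exact Or.inr ⟨hz, hc⟩
  exact (hsubU hy).2


/-- A smooth function on a nonempty connected open subset of ℝⁿ which is harmonic and
eikonal (its gradient has constant norm `C`) is affine: `f x = ⟪a, x⟫ + b` with `‖a‖ = C`. -/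
theorem harmonic_eikonal_is_linear {n : ℕ} (hn : 1 ≤ n)
    (U : Set (EuclideanSpace ℝ (Fin n)))
    (hUopen : IsOpen U) (hUconn : IsConnected U) (hUne : U.Nonempty)
    (f : EuclideanSpace ℝ (Fin n) → ℝ) (hf : ContDiffOn ℝ (⊤ : ℕ∞) f U)
    (hharm : ∀ x ∈ U, laplacian f x = 0)
    (C : ℝ) (hC : 0 ≤ C) (heik : ∀ x ∈ U, ‖gradient f x‖ = C) :
    ∃ (a : EuclideanSpace ℝ (Fin n)) (b : ℝ), ‖a‖ = C ∧
      ∀ x ∈ U, f x = ⟪a, x⟫ + b := by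
  classical
  obtain ⟨x₀, hx₀⟩ := hUne
  set e : Fin n → EuclideanSpace ℝ (Fin n) := fun i => EuclideanSpace.single i 1 with he
  -- smoothness
  have hfx : ∀ x ∈ U, ContDiffAt ℝ (⊤ : ℕ∞) f x := fun x hx => hf.contDiffAt (hUopen.mem_nhds hx)
  have hD1 : ∀ x ∈ U, ContDiffAt ℝ (⊤ : ℕ∞) (fderiv ℝ f) x :=
    fun x hx => (hfx x hx).fderiv_right (by simp)
  have hD2 : ∀ x ∈ U, ContDiffAt ℝ (⊤ : ℕ∞) (fderiv ℝ (fderiv ℝ f)) x :=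
    fun x hx => (hD1 x hx).fderiv_right (by simp)
  have hfdiff : ∀ x ∈ U, DifferentiableAt ℝ f x :=
    fun x hx => (hfx x hx).differentiableAt (by simp)
  have hD1diff : ∀ x ∈ U, DifferentiableAt ℝ (fderiv ℝ f) x :=
    fun x hx => (hD1 x hx).differentiableAt (by simp)
  have hD2diff : ∀ x ∈ U, DifferentiableAt ℝ (fderiv ℝ (fderiv ℝ f)) x :=
    fun x hx => (hD2 x hx).differentiableAt (by simp)
  set D2 : EuclideanSpace ℝ (Fin n) →
      EuclideanSpace ℝ (Fin n) →L[ℝ] EuclideanSpace ℝ (Fin n) →L[ℝ] ℝ :=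
    fderiv ℝ (fderiv ℝ f) with hD2def
  set D3 : EuclideanSpace ℝ (Fin n) →
      EuclideanSpace ℝ (Fin n) →L[ℝ] EuclideanSpace ℝ (Fin n) →L[ℝ]
        EuclideanSpace ℝ (Fin n) →L[ℝ] ℝ :=
    fderiv ℝ (fderiv ℝ (fderiv ℝ f)) with hD3def
  -- derivative of gradient
  have hgradfderiv : ∀ x ∈ U, fderiv ℝ (gradient f) x = toVec.comp (D2 x) := by
    intro x hx
    rw [grad_eq' f]
    exact (toVec.hasFDerivAt.comp x (hD1diff x hx).hasFDerivAt).fderiv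
  -- trace vanishes
  have htrace : ∀ x ∈ U, ∑ i, D2 x (e i) (e i) = 0 := by
    intro x hx
    have := hharm x hx
    rw [laplacian] at this
    rw [← this]
    refine Finset.sum_congr rfl fun i _ => ?_
    rw [hgradfderiv x hx]
    simp only [ContinuousLinearMap.comp_apply]
    rw [toVec_coord]
  -- derivative of applied second derivative
  have happ1 : ∀ x ∈ U, ∀ (u : EuclideanSpace ℝ (Fin n)),
      fderiv ℝ (fun y => fderiv ℝ f y u) x = (D2 x).flip u := by
    intro x hx u
    rw [fderiv_clm_apply (hD1diff x hx) (differentiableAt_const u)]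
    simp
    rfl
  have happ2 : ∀ x ∈ U, ∀ (u v w : EuclideanSpace ℝ (Fin n)),
      fderiv ℝ (fun y => D2 y u v) x w = D3 x w u v := by
    intro x hx u v w
    have hA : DifferentiableAt ℝ (fun y => D2 y u) x :=
      (hD2diff x hx).clm_apply (differentiableAt_const u)
    rw [fderiv_clm_apply hA (differentiableAt_const v)]
    rw [fderiv_clm_apply (hD2diff x hx) (differentiableAt_const u)]
    simp
    rfl
  -- symmetry
  have hsymm2 : ∀ x ∈ U, ∀ u v, D2 x u v = D2 x v u := by
    intro x hx u v
    exact ((hfx x hx).isSymmSndFDerivAt (by simp; exact WithTop.coe_le_coe.2 le_top)).eq u v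
  have hsymm3a : ∀ x ∈ U, ∀ w u, D3 x w u = D3 x u w := by
    intro x hx w u
    exact ((hD1 x hx).isSymmSndFDerivAt (by simp; exact WithTop.coe_le_coe.2 le_top)).eq w u
  have hsymm3b : ∀ x ∈ U, ∀ w u v, D3 x w u v = D3 x w v u := by
    intro x hx w u v
    have hev : (fun y => D2 y u v) =ᶠ[nhds x] (fun y => D2 y v u) :=
      Filter.eventuallyEq_of_mem (hUopen.mem_nhds hx) (fun y hy => hsymm2 y hy u v)
    calc D3 x w u v = fderiv ℝ (fun y => D2 y u v) x w := (happ2 x hx u v w).symm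
      _ = fderiv ℝ (fun y => D2 y v u) x w := by rw [hev.fderiv_eq]
      _ = D3 x w v u := happ2 x hx v u w
  have hD2app_diff : ∀ x ∈ U, ∀ u v, DifferentiableAt ℝ (fun y => D2 y u v) x := by
    intro x hx u v
    exact ((hD2diff x hx).clm_apply (differentiableAt_const u)).clm_apply
      (differentiableAt_const v)
  -- derivative of the trace vanishes
  have htrace' : ∀ x ∈ U, ∀ w, ∑ i, D3 x w (e i) (e i) = 0 := by
    intro x hx w
    have hev : (fun y => ∑ i, D2 y (e i) (e i)) =ᶠ[nhds x] (fun _ => (0:ℝ)) :=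
      Filter.eventuallyEq_of_mem (hUopen.mem_nhds hx) (fun y hy => htrace y hy)
    have h0 : fderiv ℝ (fun y => ∑ i, D2 y (e i) (e i)) x = 0 := by
      rw [hev.fderiv_eq]; exact fderiv_const_apply 0
    have hsum : fderiv ℝ (fun y => ∑ i, D2 y (e i) (e i)) x w
        = ∑ i, fderiv ℝ (fun y => D2 y (e i) (e i)) x w := by
      rw [fderiv_fun_sum (fun i _ => hD2app_diff x hx (e i) (e i))]
      simp
    rw [← Finset.sum_congr rfl fun i _ => happ2 x hx (e i) (e i) w, ← hsum, h0]
    simp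
  -- eikonal: first consequence
  have hu_fderiv : ∀ x ∈ U, ∀ i w,
      fderiv ℝ (fun y => fderiv ℝ f y (e i)) x w = D2 x w (e i) := by
    intro x hx i w
    rw [happ1 x hx (e i)]
    simp
  have hu_diff : ∀ x ∈ U, ∀ i, DifferentiableAt ℝ (fun y => fderiv ℝ f y (e i)) x :=
    fun x hx i => (hD1diff x hx).clm_apply (differentiableAt_const (e i))
  have hphi : ∀ y ∈ U, ∑ i, (fderiv ℝ f y (e i))^2 = C^2 := by
    intro y hy
    have hcoord : ∀ i, gradient f y i = fderiv ℝ f y (e i) := by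
      intro i
      rw [grad_eq' f]
      exact toVec_coord _ i
    have : ∑ i, (fderiv ℝ f y (e i))^2 = ⟪gradient f y, gradient f y⟫ := by
      rw [PiLp.inner_apply]
      refine (Finset.sum_congr rfl fun i _ => ?_).symm
      simp [RCLike.inner_apply, hcoord i, sq]
    rw [this, real_inner_self_eq_norm_sq, heik y hy]
  have step1 : ∀ x ∈ U, ∀ w, ∑ i, fderiv ℝ f x (e i) * D2 x w (e i) = 0 := by
    intro x hx w
    have hev : (fun y => ∑ i, (fderiv ℝ f y (e i))^2) =ᶠ[nhds x] (fun _ => C^2) :=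
      Filter.eventuallyEq_of_mem (hUopen.mem_nhds hx) (fun y hy => hphi y hy)
    have h0 : fderiv ℝ (fun y => ∑ i, (fderiv ℝ f y (e i))^2) x = 0 := by
      rw [hev.fderiv_eq]; exact fderiv_const_apply _
    have hterm : ∀ i, fderiv ℝ (fun y => (fderiv ℝ f y (e i))^2) x w
        = 2 * (fderiv ℝ f x (e i) * D2 x w (e i)) := by
      intro i
      have : (fun y => (fderiv ℝ f y (e i))^2)
          = fun y => (fderiv ℝ f y (e i)) * (fderiv ℝ f y (e i)) := by
        funext y; ring
      rw [this, fderiv_fun_mul (hu_diff x hx i) (hu_diff x hx i)]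
      simp only [ContinuousLinearMap.add_apply, ContinuousLinearMap.smul_apply,
        smul_eq_mul, hu_fderiv x hx i w]
      ring
    have hsum : fderiv ℝ (fun y => ∑ i, (fderiv ℝ f y (e i))^2) x w
        = ∑ i, fderiv ℝ (fun y => (fderiv ℝ f y (e i))^2) x w := by
      rw [fderiv_fun_sum (fun i _ => by
        have : (fun y => (fderiv ℝ f y (e i))^2)
            = fun y => (fderiv ℝ f y (e i)) * (fderiv ℝ f y (e i)) := by funext y; ring
        rw [this]; exact (hu_diff x hx i).mul (hu_diff x hx i))]
      simp
    have : (0:ℝ) = ∑ i, 2 * (fderiv ℝ f x (e i) * D2 x w (e i)) := by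
      rw [← Finset.sum_congr rfl fun i _ => hterm i, ← hsum, h0]
      simp
    rw [← Finset.mul_sum] at this
    linarith
  -- differentiate step1
  have step2 : ∀ x ∈ U, ∀ j,
      (∑ i, (D2 x (e j) (e i))^2)
        + ∑ i, fderiv ℝ f x (e i) * D3 x (e j) (e j) (e i) = 0 := by
    intro x hx j
    have hev : (fun y => ∑ i, fderiv ℝ f y (e i) * D2 y (e j) (e i))
        =ᶠ[nhds x] (fun _ => (0:ℝ)) :=
      Filter.eventuallyEq_of_mem (hUopen.mem_nhds hx) (fun y hy => step1 y hy (e j))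
    have h0 : fderiv ℝ (fun y => ∑ i, fderiv ℝ f y (e i) * D2 y (e j) (e i)) x = 0 := by
      rw [hev.fderiv_eq]; exact fderiv_const_apply 0
    have hterm : ∀ i, fderiv ℝ (fun y => fderiv ℝ f y (e i) * D2 y (e j) (e i)) x (e j)
        = (D2 x (e j) (e i))^2 + fderiv ℝ f x (e i) * D3 x (e j) (e j) (e i) := by
      intro i
      rw [fderiv_fun_mul (hu_diff x hx i) (hD2app_diff x hx (e j) (e i))]
      simp only [ContinuousLinearMap.add_apply, ContinuousLinearMap.smul_apply,
        smul_eq_mul, hu_fderiv x hx i (e j), happ2 x hx (e j) (e i) (e j)]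
      ring
    have hsum : fderiv ℝ (fun y => ∑ i, fderiv ℝ f y (e i) * D2 y (e j) (e i)) x (e j)
        = ∑ i, fderiv ℝ (fun y => fderiv ℝ f y (e i) * D2 y (e j) (e i)) x (e j) := by
      rw [fderiv_fun_sum (fun i _ => (hu_diff x hx i).fun_mul (hD2app_diff x hx (e j) (e i)))]
      simp
    have : (0:ℝ) = ∑ i, ((D2 x (e j) (e i))^2
        + fderiv ℝ f x (e i) * D3 x (e j) (e j) (e i)) := by
      rw [← Finset.sum_congr rfl fun i _ => hterm i, ← hsum, h0]
      simp
    rw [Finset.sum_add_distrib] at this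
    linarith
  -- Bochner: Hessian vanishes on U
  have hHess : ∀ x ∈ U, ∀ j i, D2 x (e j) (e i) = 0 := by
    intro x hx
    have hsum0 : ∑ j, ∑ i, (D2 x (e j) (e i))^2 = 0 := by
      have h1 : ∑ j, ((∑ i, (D2 x (e j) (e i))^2)
          + ∑ i, fderiv ℝ f x (e i) * D3 x (e j) (e j) (e i)) = 0 := by
        rw [Finset.sum_eq_zero fun j _ => step2 x hx j]
      rw [Finset.sum_add_distrib] at h1
      have h2 : ∑ j, ∑ i, fderiv ℝ f x (e i) * D3 x (e j) (e j) (e i) = 0 := by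
        rw [Finset.sum_comm]
        refine Finset.sum_eq_zero fun i _ => ?_
        have h3 : ∀ j, D3 x (e j) (e j) (e i) = D3 x (e i) (e j) (e j) := by
          intro j
          rw [hsymm3b x hx (e j) (e j) (e i), hsymm3a x hx (e j) (e i)]
        rw [← Finset.mul_sum, Finset.sum_congr rfl fun j _ => h3 j, htrace' x hx (e i),
          mul_zero]
      rw [h2, add_zero] at h1
      exact h1
    intro j i
    have h4 : ∀ j ∈ Finset.univ, ∑ i, (D2 x (e j) (e i))^2 = 0 := by
      intro j _
      have := (Finset.sum_eq_zero_iff_of_nonneg (fun j _ =>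
        Finset.sum_nonneg fun i _ => sq_nonneg _)).1 hsum0
      exact this j (Finset.mem_univ j)
    have h5 := (Finset.sum_eq_zero_iff_of_nonneg (fun i _ => sq_nonneg _)).1
      (h4 j (Finset.mem_univ j)) i (Finset.mem_univ i)
    exact pow_eq_zero_iff (two_ne_zero) |>.1 h5
  have hD2zero : ∀ x ∈ U, D2 x = 0 := by
    intro x hx
    set b := (EuclideanSpace.basisFun (Fin n) ℝ).toBasis with hb
    have hbe : ∀ i, b i = e i := by
      intro i
      rw [hb, OrthonormalBasis.coe_toBasis, EuclideanSpace.basisFun_apply]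
    apply ContinuousLinearMap.coe_injective
    refine Module.Basis.ext b fun j => ?_
    apply ContinuousLinearMap.coe_injective
    refine Module.Basis.ext b fun i => ?_
    simp [hbe, hHess x hx j i]
  -- fderiv f is constant on U
  have hD1const : ∀ y ∈ U, fderiv ℝ f y = fderiv ℝ f x₀ :=
    fun y hy => const_on_of_fderiv_zero hUopen hUconn.isPreconnected hD1diff hD2zero hx₀ hy
  set L := fderiv ℝ f x₀ with hL
  refine ⟨gradient f x₀, f x₀ - L x₀, heik x₀ hx₀, ?_⟩
  have hhdiff : ∀ x ∈ U, DifferentiableAt ℝ (fun y => f y - L y) x :=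
    fun x hx => (hfdiff x hx).sub (L.differentiableAt)
  have hhzero : ∀ x ∈ U, fderiv ℝ (fun y => f y - L y) x = 0 := by
    intro x hx
    rw [fderiv_fun_sub (hfdiff x hx) L.differentiableAt, L.fderiv, hD1const x hx]
    simp
  intro x hx
  have := const_on_of_fderiv_zero hUopen hUconn.isPreconnected hhdiff hhzero hx₀ hx
  have hinner : ⟪gradient f x₀, x⟫ = L x := by
    rw [grad_eq' f]; exact toVec_inner _ x
  rw [hinner]
  linarith [this]
end

section
/- Let n ≥ 1, let U ⊆ ℝⁿ be a nonempty connected open set, and let f : U → ℝ be a smooth function that is eikonal (there is a constant C ≥ 0 with ‖∇f(x)‖ = C for all x ∈ U) and satisfies the minimal graph equation div(∇f / √(1 + ‖∇f‖²)) = 0 on U, where div denotes the divergence (the trace of the total derivative of the vector field). Then f is affine: there exist a ∈ ℝⁿ and b ∈ ℝ with f(x) = ⟨a, x⟩ + b for all x ∈ U; in other words, the graph of f, which is a minimal constant angle hypersurface of ℝⁿ⁺¹, is contained in a hyperplane. -/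
open scoped RealInnerProductSpace

/-- The divergence of a vector field `V : ℝⁿ → ℝⁿ` at `x`:
the trace of its total derivative. -/
noncomputable def divergence {n : ℕ} (V : EuclideanSpace ℝ (Fin n) → EuclideanSpace ℝ (Fin n))
    (x : EuclideanSpace ℝ (Fin n)) : ℝ :=
  ∑ i : Fin n, fderiv ℝ V x (EuclideanSpace.single i 1) i

open Metric Set Filter

noncomputable def pd {n : ℕ} (u : EuclideanSpace ℝ (Fin n) → ℝ) (i : Fin n)
    (y : EuclideanSpace ℝ (Fin n)) : ℝ := fderiv ℝ u y (EuclideanSpace.single i 1)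

lemma pd_contDiffOn {n : ℕ} {U : Set (EuclideanSpace ℝ (Fin n))} (hU : IsOpen U)
    {u : EuclideanSpace ℝ (Fin n) → ℝ} (hu : ContDiffOn ℝ (⊤ : ℕ∞) u U) (i : Fin n) :
    ContDiffOn ℝ (⊤ : ℕ∞) (pd u i) U :=
  (hu.fderiv_of_isOpen hU (by simp)).clm_apply contDiffOn_const

lemma diffAt_of_contDiffOn {n : ℕ} {U : Set (EuclideanSpace ℝ (Fin n))} (hU : IsOpen U)
    {F : Type*} [NormedAddCommGroup F] [NormedSpace ℝ F]
    {u : EuclideanSpace ℝ (Fin n) → F} (hu : ContDiffOn ℝ (⊤ : ℕ∞) u U)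
    {x : EuclideanSpace ℝ (Fin n)} (hx : x ∈ U) : DifferentiableAt ℝ u x :=
  ((hu.contDiffAt (hU.mem_nhds hx)).of_le (by simp)).differentiableAt (n := 1) one_ne_zero

lemma fderiv_pd {n : ℕ} {u : EuclideanSpace ℝ (Fin n) → ℝ} {x : EuclideanSpace ℝ (Fin n)}
    (hu : ContDiffAt ℝ (⊤ : ℕ∞) u x) (v w : EuclideanSpace ℝ (Fin n)) :
    fderiv ℝ (fun y => fderiv ℝ u y v) x w = fderiv ℝ (fderiv ℝ u) x w v := by
  have h1 : DifferentiableAt ℝ (fderiv ℝ u) x :=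
    ((hu.fderiv_right (m := 1) (WithTop.coe_le_coe.2 le_top))).differentiableAt one_ne_zero
  have h2 : fderiv ℝ (fun y => (fderiv ℝ u y) v) x
      = (fderiv ℝ u x).comp (fderiv ℝ (fun _ : EuclideanSpace ℝ (Fin n) => v) x)
        + (fderiv ℝ (fderiv ℝ u) x).flip v :=
    fderiv_clm_apply h1 (differentiableAt_const v)
  simp [fderiv_fun_const] at h2
  simpa using congrArg (fun L => L w) h2

lemma pd_comm {n : ℕ} {u : EuclideanSpace ℝ (Fin n) → ℝ} {x : EuclideanSpace ℝ (Fin n)}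
    (hu : ContDiffAt ℝ (⊤ : ℕ∞) u x) (i j : Fin n) :
    pd (pd u i) j x = pd (pd u j) i x := by
  have h1 : pd (pd u i) j x
      = fderiv ℝ (fderiv ℝ u) x (EuclideanSpace.single j 1) (EuclideanSpace.single i 1) :=
    fderiv_pd hu _ _
  have h2 : pd (pd u j) i x
      = fderiv ℝ (fderiv ℝ u) x (EuclideanSpace.single i 1) (EuclideanSpace.single j 1) :=
    fderiv_pd hu _ _
  rw [h1, h2, (hu.isSymmSndFDerivAt (by simp [minSmoothness_of_isRCLikeNormedField]; exact WithTop.coe_le_coe.2 le_top)).eq]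

lemma eqOn_const_of_fderiv_zero {E F : Type*} [NormedAddCommGroup E] [NormedSpace ℝ E]
    [NormedAddCommGroup F] [NormedSpace ℝ F] {U : Set E} (hU : IsOpen U)
    (hc : IsPreconnected U) {f : E → F} (hd : ∀ x ∈ U, DifferentiableAt ℝ f x)
    (hz : ∀ x ∈ U, fderiv ℝ f x = 0) {x y : E} (hx : x ∈ U) (hy : y ∈ U) : f y = f x := by
  have loc : ∀ z ∈ U, ∀ᶠ w in nhds z, f w = f z := by
    intro z hzU
    obtain ⟨r, hr, hball⟩ := Metric.isOpen_iff.1 hU z hzU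
    have hdiff : DifferentiableOn ℝ f (ball z r) := fun w hw =>
      (hd w (hball hw)).differentiableWithinAt
    have hcst : ∀ w ∈ ball z r, f w = f z := by
      intro w hw
      apply (convex_ball z r).is_const_of_fderivWithin_eq_zero hdiff ?_ hw (mem_ball_self hr)
      intro p hp
      rw [fderivWithin_of_isOpen isOpen_ball hp]
      exact hz _ (hball hp)
    filter_upwards [isOpen_ball.mem_nhds (mem_ball_self hr)] with w hw using hcst w hw
  set u : Set E := {w | w ∈ U ∧ f w = f x} with hu
  have hopen : IsOpen u := by
    rw [isOpen_iff_mem_nhds]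
    rintro w ⟨hwU, hwf⟩
    filter_upwards [loc w hwU, hU.mem_nhds hwU] with p hp1 hp2
    exact ⟨hp2, hp1.trans hwf⟩
  have hcl : closure u ∩ U ⊆ u := by
    rintro w ⟨hwc, hwU⟩
    obtain ⟨p, hp1, hp2⟩ := mem_closure_iff_nhds.1 hwc _ (loc w hwU)
    exact ⟨hwU, hp1 ▸ hp2.2⟩
  have hsub : U ⊆ u :=
    hc.subset_of_closure_inter_subset hopen ⟨x, hx, hx, rfl⟩ hcl
  exact (hsub hy).2

lemma fderiv_eqOn_open {E F : Type*} [NormedAddCommGroup E] [NormedSpace ℝ E]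
    [NormedAddCommGroup F] [NormedSpace ℝ F] {U : Set E} (hU : IsOpen U)
    {u v : E → F} (h : ∀ y ∈ U, u y = v y) {x : E} (hx : x ∈ U) :
    fderiv ℝ u x = fderiv ℝ v x :=
  Filter.EventuallyEq.fderiv_eq (by filter_upwards [hU.mem_nhds hx] with y hy using h y hy)

lemma fderiv_zero_of_const_on {E F : Type*} [NormedAddCommGroup E] [NormedSpace ℝ E]
    [NormedAddCommGroup F] [NormedSpace ℝ F] {U : Set E} (hU : IsOpen U)
    {u : E → F} {c : F} (h : ∀ y ∈ U, u y = c) {x : E} (hx : x ∈ U) :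
    fderiv ℝ u x = 0 := by
  rw [fderiv_eqOn_open hU (v := fun _ => c) h hx]
  exact fderiv_const_apply c

lemma fderiv_proj {n : ℕ} {g : EuclideanSpace ℝ (Fin n) → EuclideanSpace ℝ (Fin n)}
    {x : EuclideanSpace ℝ (Fin n)} (hg : DifferentiableAt ℝ g x) (i : Fin n)
    (v : EuclideanSpace ℝ (Fin n)) :
    fderiv ℝ (fun y => g y i) x v = (fderiv ℝ g x v) i := by
  have h := ((EuclideanSpace.proj (𝕜 := ℝ) i).hasFDerivAt.comp x hg.hasFDerivAt).fderiv
  exact congrArg (fun L => L v) h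

lemma sum_single_smul {n : ℕ} (v : EuclideanSpace ℝ (Fin n)) :
    ∑ j : Fin n, v j • (EuclideanSpace.single j (1:ℝ) : EuclideanSpace ℝ (Fin n)) = v := by
  have h := (EuclideanSpace.basisFun (Fin n) ℝ).sum_repr v
  simpa [EuclideanSpace.basisFun_apply, EuclideanSpace.basisFun_repr] using h

/-- A smooth eikonal function on a nonempty connected open subset of ℝⁿ satisfying the
minimal graph equation `div (∇f / √(1 + ‖∇f‖²)) = 0` is affine; i.e. the minimal constant
angle hypersurface given by the graph of `f` lies in a hyperplane. -/
theorem minimal_eikonal_graph_is_hyperplane {n : ℕ} (hn : 1 ≤ n)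
    (U : Set (EuclideanSpace ℝ (Fin n)))
    (hUopen : IsOpen U) (hUconn : IsConnected U) (hUne : U.Nonempty)
    (f : EuclideanSpace ℝ (Fin n) → ℝ) (hf : ContDiffOn ℝ (⊤ : ℕ∞) f U)
    (C : ℝ) (hC : 0 ≤ C) (heik : ∀ x ∈ U, ‖gradient f x‖ = C)
    (hmin : ∀ x ∈ U,
      divergence (fun y => (Real.sqrt (1 + ‖gradient f y‖ ^ 2))⁻¹ • gradient f y) x = 0) :
    ∃ (a : EuclideanSpace ℝ (Fin n)) (b : ℝ),
      ∀ x ∈ U, f x = ⟪a, x⟫ + b := by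
  obtain ⟨x₀, hx₀⟩ := hUne
  -- basic facts about the gradient
  have hgrad_eq : ∀ (y v : EuclideanSpace ℝ (Fin n)),
      fderiv ℝ f y v = ⟪gradient f y, v⟫ := fun y v =>
    (InnerProductSpace.toDual_symm_apply).symm
  have grad_apply : ∀ (y : EuclideanSpace ℝ (Fin n)) (i : Fin n),
      gradient f y i = pd f i y := by
    intro y i
    have h : ⟪gradient f y, (EuclideanSpace.single i (1:ℝ) : EuclideanSpace ℝ (Fin n))⟫
        = fderiv ℝ f y (EuclideanSpace.single i 1) := InnerProductSpace.toDual_symm_apply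
    rw [EuclideanSpace.inner_single_right] at h
    simpa [pd] using h
  have hgradCD : ContDiffOn ℝ (⊤ : ℕ∞) (gradient f) U := by
    have h1 : ContDiffOn ℝ (⊤ : ℕ∞) (fderiv ℝ f) U := hf.fderiv_of_isOpen hUopen (by simp)
    exact ((InnerProductSpace.toDual ℝ
      (EuclideanSpace ℝ (Fin n))).symm.contDiff).comp_contDiffOn h1
  have hgdiff : ∀ x ∈ U, DifferentiableAt ℝ (gradient f) x := fun x hx =>
    diffAt_of_contDiffOn hUopen hgradCD hx
  have hGsmooth : ∀ i, ContDiffOn ℝ (⊤ : ℕ∞) (pd f i) U := fun i => pd_contDiffOn hUopen hf i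
  have hGijsmooth : ∀ i j, ContDiffOn ℝ (⊤ : ℕ∞) (pd (pd f i) j) U := fun i j =>
    pd_contDiffOn hUopen (hGsmooth i) j
  have hGdiff : ∀ i, ∀ x ∈ U, DifferentiableAt ℝ (pd f i) x := fun i x hx =>
    diffAt_of_contDiffOn hUopen (hGsmooth i) hx
  have hGijdiff : ∀ i j, ∀ x ∈ U, DifferentiableAt ℝ (pd (pd f i) j) x := fun i j x hx =>
    diffAt_of_contDiffOn hUopen (hGijsmooth i j) hx
  -- second partials of f, via pd, equal derivatives of gradient components
  have pd_pd_eq : ∀ i j, ∀ x ∈ U, fderiv ℝ (pd f i) x (EuclideanSpace.single j 1)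
      = pd (pd f i) j x := fun i j x hx => rfl
  -- Step 1 : f is harmonic on U
  have harm : ∀ x ∈ U, ∑ i, pd (pd f i) i x = 0 := by
    intro x hx
    have hpos : (0:ℝ) < Real.sqrt (1 + C ^ 2) := Real.sqrt_pos.2 (by positivity)
    set c : ℝ := (Real.sqrt (1 + C ^ 2))⁻¹ with hc'
    have hcne : c ≠ 0 := inv_ne_zero (ne_of_gt hpos)
    have hVloc : (fun y => (Real.sqrt (1 + ‖gradient f y‖ ^ 2))⁻¹ • gradient f y)
        =ᶠ[nhds x] (fun y => c • gradient f y) := by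
      filter_upwards [hUopen.mem_nhds hx] with y hy
      rw [heik y hy]
    have hfd : fderiv ℝ (fun y => (Real.sqrt (1 + ‖gradient f y‖ ^ 2))⁻¹ • gradient f y) x
        = c • fderiv ℝ (gradient f) x := by
      rw [hVloc.fderiv_eq]
      exact fderiv_const_smul (hgdiff x hx) c
    have hdiv := hmin x hx
    rw [divergence] at hdiv
    have hterm : ∀ i : Fin n,
        (fderiv ℝ (fun y => (Real.sqrt (1 + ‖gradient f y‖ ^ 2))⁻¹ • gradient f y) x
          (EuclideanSpace.single i 1)) i = c * pd (pd f i) i x := by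
      intro i
      rw [hfd]
      have h1 : ((c • fderiv ℝ (gradient f) x) (EuclideanSpace.single i 1)) i
          = c * ((fderiv ℝ (gradient f) x (EuclideanSpace.single i 1)) i) := rfl
      rw [h1]
      congr 1
      rw [← fderiv_proj (hgdiff x hx) i]
      have h2 : (fun y => gradient f y i) = pd f i := by
        funext y; exact grad_apply y i
      rw [h2]
      rfl
    rw [Finset.sum_congr rfl (fun i _ => hterm i), ← Finset.mul_sum] at hdiv
    exact (mul_eq_zero.1 hdiv).resolve_left hcne
  -- Step 2 : each partial derivative of f is harmonic on U
  have lap : ∀ i, ∀ x ∈ U, ∑ j, fderiv ℝ (pd (pd f i) j) x (EuclideanSpace.single j 1) = 0 := by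
    intro i x hx
    have h1 : fderiv ℝ (fun y => ∑ j, pd (pd f j) j y) x = 0 :=
      fderiv_zero_of_const_on hUopen (fun y hy => harm y hy) hx
    have h2 : fderiv ℝ (fun y => ∑ j, pd (pd f j) j y) x
        = ∑ j, fderiv ℝ (pd (pd f j) j) x :=
      fderiv_fun_sum (fun j _ => hGijdiff j j x hx)
    have h3 : ∑ j, fderiv ℝ (pd (pd f j) j) x (EuclideanSpace.single i 1) = 0 := by
      have := congrArg (fun L => L (EuclideanSpace.single i 1)) (h2.symm.trans h1)
      simpa using this
    have h4 : ∀ j, fderiv ℝ (pd (pd f j) j) x (EuclideanSpace.single i 1)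
        = fderiv ℝ (pd (pd f i) j) x (EuclideanSpace.single j 1) := by
      intro j
      have hcj : ContDiffAt ℝ (⊤ : ℕ∞) (pd f j) x := (hGsmooth j).contDiffAt (hUopen.mem_nhds hx)
      have hswap : fderiv ℝ (pd (pd f j) j) x (EuclideanSpace.single i 1)
          = fderiv ℝ (pd (pd f j) i) x (EuclideanSpace.single j 1) := by
        have ha : fderiv ℝ (pd (pd f j) j) x (EuclideanSpace.single i 1)
            = fderiv ℝ (fderiv ℝ (pd f j)) x (EuclideanSpace.single i 1)
              (EuclideanSpace.single j 1) := fderiv_pd hcj _ _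
        have hb : fderiv ℝ (pd (pd f j) i) x (EuclideanSpace.single j 1)
            = fderiv ℝ (fderiv ℝ (pd f j)) x (EuclideanSpace.single j 1)
              (EuclideanSpace.single i 1) := fderiv_pd hcj _ _
        rw [ha, hb, (hcj.isSymmSndFDerivAt (by simp [minSmoothness_of_isRCLikeNormedField]; exact WithTop.coe_le_coe.2 le_top)).eq]
      rw [hswap]
      congr 1
      apply fderiv_eqOn_open hUopen _ hx
      intro y hy
      exact pd_comm (hf.contDiffAt (hUopen.mem_nhds hy)) j i
    rw [← h3]
    exact (Finset.sum_congr rfl (fun j _ => (h4 j).symm))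
  -- Step 3 : Bochner — all second partials vanish on U
  have hess0 : ∀ x ∈ U, ∀ i j, pd (pd f i) j x = 0 := by
    intro x hx
    -- the squared norm of the gradient is constant on U
    have hconst : ∀ z ∈ U, (∑ i, pd f i z * pd f i z) = C ^ 2 := by
      intro z hz
      have h1 : ‖gradient f z‖ ^ 2 = C ^ 2 := by rw [heik z hz]
      rw [← h1, ← real_inner_self_eq_norm_sq]
      rw [real_inner_self_eq_norm_sq, EuclideanSpace.real_norm_sq_eq]
      simp [grad_apply, sq]
    -- first divergence identity : q j = 0 on U
    have hq : ∀ j, ∀ y ∈ U, ∑ i, pd f i y * pd (pd f i) j y = 0 := by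
      intro j y hy
      have h1 : fderiv ℝ (fun z => ∑ i, pd f i z * pd f i z) y = 0 :=
        fderiv_zero_of_const_on hUopen hconst hy
      have h2 : fderiv ℝ (fun z => ∑ i, pd f i z * pd f i z) y
          = ∑ i, fderiv ℝ (fun z => pd f i z * pd f i z) y :=
        fderiv_fun_sum (fun i _ => (hGdiff i y hy).mul (hGdiff i y hy))
      have h3 : ∀ i, fderiv ℝ (fun z => pd f i z * pd f i z) y (EuclideanSpace.single j 1)
          = 2 * (pd f i y * pd (pd f i) j y) := by
        intro i
        rw [fderiv_fun_mul (hGdiff i y hy) (hGdiff i y hy)]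
        have : pd (pd f i) j y = fderiv ℝ (pd f i) y (EuclideanSpace.single j 1) := rfl
        simp only [ContinuousLinearMap.add_apply, ContinuousLinearMap.smul_apply,
          smul_eq_mul, this]
        ring
      have h4 := congrArg (fun L => L (EuclideanSpace.single j 1)) (h2.symm.trans h1)
      simp only [ContinuousLinearMap.zero_apply, ContinuousLinearMap.sum_apply] at h4
      rw [Finset.sum_congr rfl (fun i _ => h3 i), ← Finset.mul_sum] at h4
      linarith [h4]
    -- differentiate q j in direction j and sum over j
    have key : ∑ j, ∑ i, pd (pd f i) j x * pd (pd f i) j x = 0 := by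
      have hqd : ∀ j : Fin n,
          fderiv ℝ (fun y => ∑ i, pd f i y * pd (pd f i) j y) x = 0 := fun j =>
        fderiv_zero_of_const_on hUopen (hq j) hx
      have hqd2 : ∀ j : Fin n,
          fderiv ℝ (fun y => ∑ i, pd f i y * pd (pd f i) j y) x
          = ∑ i, fderiv ℝ (fun y => pd f i y * pd (pd f i) j y) x := fun j =>
        fderiv_fun_sum (fun i _ => (hGdiff i x hx).mul (hGijdiff i j x hx))
      have hterm : ∀ j i, fderiv ℝ (fun y => pd f i y * pd (pd f i) j y) x
            (EuclideanSpace.single j 1)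
          = pd (pd f i) j x * pd (pd f i) j x
            + pd f i x * fderiv ℝ (pd (pd f i) j) x (EuclideanSpace.single j 1) := by
        intro j i
        rw [fderiv_fun_mul (hGdiff i x hx) (hGijdiff i j x hx)]
        have : pd (pd f i) j x = fderiv ℝ (pd f i) x (EuclideanSpace.single j 1) := rfl
        simp only [ContinuousLinearMap.add_apply, ContinuousLinearMap.smul_apply,
          smul_eq_mul]
        rw [← this]
        ring
      have hsum : ∀ j : Fin n, (0:ℝ)
          = ∑ i, (pd (pd f i) j x * pd (pd f i) j x
            + pd f i x * fderiv ℝ (pd (pd f i) j) x (EuclideanSpace.single j 1)) := by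
        intro j
        have h4 := congrArg (fun L => L (EuclideanSpace.single j 1))
          ((hqd2 j).symm.trans (hqd j))
        simp only [ContinuousLinearMap.zero_apply, ContinuousLinearMap.sum_apply] at h4
        rw [Finset.sum_congr rfl (fun i _ => hterm j i)] at h4
        linarith [h4]
      have h5 : (0:ℝ) = ∑ j, ∑ i, (pd (pd f i) j x * pd (pd f i) j x
          + pd f i x * fderiv ℝ (pd (pd f i) j) x (EuclideanSpace.single j 1)) := by
        have h5' : ∑ j : Fin n, (0:ℝ) = ∑ j, ∑ i, (pd (pd f i) j x * pd (pd f i) j x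
            + pd f i x * fderiv ℝ (pd (pd f i) j) x (EuclideanSpace.single j 1)) :=
          Finset.sum_congr rfl (fun j _ => hsum j)
        simpa using h5'
      rw [Finset.sum_comm] at h5
      have h6 : ∀ i : Fin n, ∑ j, (pd (pd f i) j x * pd (pd f i) j x
            + pd f i x * fderiv ℝ (pd (pd f i) j) x (EuclideanSpace.single j 1))
          = ∑ j, pd (pd f i) j x * pd (pd f i) j x := by
        intro i
        rw [Finset.sum_add_distrib, ← Finset.mul_sum, lap i x hx, mul_zero, add_zero]
      rw [Finset.sum_congr rfl (fun i _ => h6 i)] at h5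
      rw [Finset.sum_comm] at h5
      exact h5.symm
    intro i j
    have hnn : ∀ p ∈ (Finset.univ : Finset (Fin n)), (0:ℝ)
        ≤ ∑ q, pd (pd f p) q x * pd (pd f p) q x := by
      intro p _
      exact Finset.sum_nonneg (fun q _ => mul_self_nonneg _)
    have h7 : ∑ q, pd (pd f i) q x * pd (pd f i) q x = 0 := by
      have := (Finset.sum_eq_zero_iff_of_nonneg hnn).1 (by
        rw [Finset.sum_comm] at key; exact key) i (Finset.mem_univ i)
      exact this
    have h8 := (Finset.sum_eq_zero_iff_of_nonneg
      (fun q _ => mul_self_nonneg (pd (pd f i) q x))).1 h7 j (Finset.mem_univ j)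
    exact mul_self_eq_zero.1 h8
  -- Step 4 : the gradient has zero derivative on U
  have hgradfd : ∀ x ∈ U, fderiv ℝ (gradient f) x = 0 := by
    intro x hx
    apply ContinuousLinearMap.ext
    intro v
    have hcomp : ∀ i : Fin n, (fderiv ℝ (gradient f) x v) i = 0 := by
      intro i
      rw [← fderiv_proj (hgdiff x hx) i v]
      have h2 : (fun y => gradient f y i) = pd f i := by
        funext y; exact grad_apply y i
      rw [h2]
      conv_lhs => rw [← sum_single_smul v]
      rw [map_sum]
      apply Finset.sum_eq_zero
      intro j _
      rw [ContinuousLinearMap.map_smul]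
      have : fderiv ℝ (pd f i) x (EuclideanSpace.single j 1) = pd (pd f i) j x := rfl
      rw [this, hess0 x hx i j]
      simp
    ext i
    exact hcomp i
  -- Step 5 : the gradient is constant on U
  have ha : ∀ x ∈ U, gradient f x = gradient f x₀ := fun x hx =>
    eqOn_const_of_fderiv_zero hUopen hUconn.isPreconnected hgdiff hgradfd hx₀ hx
  -- Step 6 : conclude that f is affine
  refine ⟨gradient f x₀, f x₀ - ⟪gradient f x₀, x₀⟫, ?_⟩
  intro x hx
  set a := gradient f x₀ with ha'
  have hinner : (fun y : EuclideanSpace ℝ (Fin n) => ⟪a, y⟫) = ⇑(innerSL ℝ a) := rfl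
  have hdi : ∀ z, DifferentiableAt ℝ (fun y : EuclideanSpace ℝ (Fin n) => ⟪a, y⟫) z :=
    fun z => (innerSL ℝ a).differentiableAt
  have hdF : ∀ z ∈ U, DifferentiableAt ℝ (fun y => f y - ⟪a, y⟫) z := fun z hz =>
    (diffAt_of_contDiffOn hUopen hf hz).sub (hdi z)
  have hFz : ∀ z ∈ U, fderiv ℝ (fun y => f y - ⟪a, y⟫) z = 0 := by
    intro z hz
    have hdf := diffAt_of_contDiffOn hUopen hf hz
    rw [fderiv_fun_sub hdf (hdi z)]
    apply ContinuousLinearMap.ext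
    intro v
    rw [ContinuousLinearMap.sub_apply]
    have h1 : fderiv ℝ (fun y : EuclideanSpace ℝ (Fin n) => ⟪a, y⟫) z = innerSL ℝ a := by
      rw [hinner]; exact (innerSL ℝ a).fderiv
    rw [h1, hgrad_eq z v, ha z hz]
    simp
  have hval := eqOn_const_of_fderiv_zero hUopen hUconn.isPreconnected hdF hFz hx₀ hx
  have : f x - ⟪a, x⟫ = f x₀ - ⟪a, x₀⟫ := hval
  linarith [this]
end

section
/- Let n ≥ 1, let U ⊆ ℝⁿ be an open set, let f : U → ℝ be a C² function with ‖∇f(x)‖ = 1 for all x ∈ U, and let γ : (a, b) → U be a differentiable curve satisfying γ′(t) = ∇f(γ(t)) for all t ∈ (a, b). Then γ is twice differentiable with γ″(t) = 0 for all t ∈ (a, b); consequently, for any t₀ ∈ (a, b), γ(t) = γ(t₀) + (t − t₀)·∇f(γ(t₀)) for all t ∈ (a, b), and f(γ(t)) = f(γ(t₀)) + (t − t₀). -/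
/-!
Differentiating `y ↦ ⟪∇f y, ∇f x⟫`, which by Cauchy–Schwarz is maximal at `y = x`, and using the
symmetry of the Hessian gives `D²f(x) (∇f x) = 0`. Hence `Df` is constant along an integral curve
`γ` of `∇f`, so `γ'` is constant, `γ` is a line, and `(f ∘ γ)' = ‖∇f‖² = 1`.
-/

open InnerProductSpace Set Filter Topology

section

variable {E : Type*} [NormedAddCommGroup E] [InnerProductSpace ℝ E] [CompleteSpace E]
  {f : E → ℝ}

theorem IsLocalMax.fderiv_fderiv_gradient_eq_zero {x : E} (hf : ContDiffAt ℝ 2 f x)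
    (hmax : IsLocalMax (fun y => ‖gradient f y‖) x) :
    fderiv ℝ (fderiv ℝ f) x (gradient f x) = 0 := by
  set u := gradient f x
  have hφ : IsLocalMax (fun y => fderiv ℝ f y u) x := by
    filter_upwards [hmax] with y hy
    rw [← inner_gradient_left, ← inner_gradient_left, real_inner_self_eq_norm_mul_norm]
    calc ⟪gradient f y, u⟫_ℝ ≤ ‖gradient f y‖ * ‖u‖ := real_inner_le_norm _ _
      _ ≤ ‖u‖ * ‖u‖ := by gcongr
  have hdiff : DifferentiableAt ℝ (fderiv ℝ f) x :=
    (hf.fderiv_right (m := 1) le_rfl).differentiableAt one_ne_zero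
  have hflip : (fderiv ℝ (fderiv ℝ f) x).flip u = 0 :=
    hφ.hasFDerivAt_eq_zero (by simpa using hdiff.hasFDerivAt.clm_apply (hasFDerivAt_const u x))
  ext w
  rw [hf.isSymmSndFDerivAt (by simp)]
  exact congr($hflip w)

variable {γ : ℝ → E} {t : ℝ}

theorem hasDerivAt_fderiv_comp_of_hasDerivAt_gradient (hf : ContDiffAt ℝ 2 f (γ t))
    (hmax : IsLocalMax (fun y => ‖gradient f y‖) (γ t))
    (hγ : HasDerivAt γ (gradient f (γ t)) t) : HasDerivAt (fderiv ℝ f ∘ γ) 0 t := by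
  have hdiff : DifferentiableAt ℝ (fderiv ℝ f) (γ t) :=
    (hf.fderiv_right (m := 1) le_rfl).differentiableAt one_ne_zero
  simpa [hmax.fderiv_fderiv_gradient_eq_zero hf] using hdiff.hasFDerivAt.comp_hasDerivAt t hγ

theorem hasDerivAt_comp_of_hasDerivAt_gradient (hf : DifferentiableAt ℝ f (γ t))
    (hγ : HasDerivAt γ (gradient f (γ t)) t) :
    HasDerivAt (f ∘ γ) (‖gradient f (γ t)‖ ^ 2) t := by
  have := hf.hasGradientAt.hasFDerivAt.comp_hasDerivAt t hγ
  rwa [toDual_apply_apply, real_inner_self_eq_norm_sq] at this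

end

theorem eqOn_add_sub_smul_of_hasDerivAt {F : Type*} [NormedAddCommGroup F] [NormedSpace ℝ F]
    {φ : ℝ → F} {v : F} {a b t₀ : ℝ} (h : ∀ t ∈ Ioo a b, HasDerivAt φ v t)
    (ht₀ : t₀ ∈ Ioo a b) : EqOn φ (fun t => φ t₀ + (t - t₀) • v) (Ioo a b) := by
  have hline : ∀ t, HasDerivAt (fun t => φ t₀ + (t - t₀) • v) v t := fun t => by
    simpa using (((hasDerivAt_id t).sub_const t₀).smul_const v).const_add (φ t₀)
  refine isOpen_Ioo.eqOn_of_deriv_eq isPreconnected_Ioo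
    (fun t ht => (h t ht).differentiableAt.differentiableWithinAt)
    (fun t _ => (hline t).differentiableAt.differentiableWithinAt)
    (fun t ht => by rw [(h t ht).deriv, (hline t).deriv]) ht₀ (by simp)

theorem gradient_flow_of_eikonal_is_line_general {n : ℕ}
    (U : Set (EuclideanSpace ℝ (Fin n))) (hUopen : IsOpen U)
    (f : EuclideanSpace ℝ (Fin n) → ℝ) (hf : ContDiffOn ℝ 2 f U)
    (heik : ∀ x ∈ U, ‖gradient f x‖ = 1)
    (a b : ℝ) (γ : ℝ → EuclideanSpace ℝ (Fin n))
    (hγU : ∀ t ∈ Set.Ioo a b, γ t ∈ U)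
    (hγ : ∀ t ∈ Set.Ioo a b, HasDerivAt γ (gradient f (γ t)) t) :
    (∀ t ∈ Set.Ioo a b, HasDerivAt (deriv γ) 0 t) ∧
    (∀ t₀ ∈ Set.Ioo a b, ∀ t ∈ Set.Ioo a b,
      γ t = γ t₀ + (t - t₀) • gradient f (γ t₀) ∧
      f (γ t) = f (γ t₀) + (t - t₀)) := by
  have hC2 : ∀ t ∈ Ioo a b, ContDiffAt ℝ 2 f (γ t) := fun t ht =>
    hf.contDiffAt (hUopen.mem_nhds (hγU t ht))
  have hmax : ∀ t ∈ Ioo a b, IsLocalMax (fun y => ‖gradient f y‖) (γ t) := fun t ht =>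
    mem_of_superset (hUopen.mem_nhds (hγU t ht)) fun y hy =>
      ((heik y hy).trans (heik _ (hγU t ht)).symm).le
  have hgrad : ∀ t₀ ∈ Ioo a b, ∀ t ∈ Ioo a b, gradient f (γ t) = gradient f (γ t₀) := by
    intro t₀ ht₀ t ht
    have := eqOn_add_sub_smul_of_hasDerivAt (fun s hs =>
      hasDerivAt_fderiv_comp_of_hasDerivAt_gradient (hC2 s hs) (hmax s hs) (hγ s hs)) ht₀ ht
    simp only [Function.comp_apply, smul_zero, add_zero] at this
    rw [gradient, gradient, this]
  refine ⟨fun t ht => ?_, fun t₀ ht₀ t ht => ⟨?_, ?_⟩⟩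
  · have hderiv : deriv γ =ᶠ[𝓝 t] fun _ => gradient f (γ t) := by
      filter_upwards [isOpen_Ioo.mem_nhds ht] with s hs
      rw [(hγ s hs).deriv, hgrad t ht s hs]
    exact (hasDerivAt_const t _).congr_of_eventuallyEq hderiv
  · exact eqOn_add_sub_smul_of_hasDerivAt (fun s hs => hgrad t₀ ht₀ s hs ▸ hγ s hs) ht₀ ht
  · have hunit : ∀ s ∈ Ioo a b, HasDerivAt (f ∘ γ) 1 s := fun s hs => by
      simpa [heik _ (hγU s hs)] using
        hasDerivAt_comp_of_hasDerivAt_gradient ((hC2 s hs).differentiableAt two_ne_zero) (hγ s hs)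
    simpa using eqOn_add_sub_smul_of_hasDerivAt hunit ht₀ ht

/-- The integral curves of the gradient of a unit eikonal function (`‖∇f‖ ≡ 1` on the open
set `U`) are straight line segments: if `γ'(t) = ∇f(γ(t))` on `(a, b)`, then `γ'' ≡ 0`,
so `γ(t) = γ(t₀) + (t − t₀)·∇f(γ(t₀))` and `f(γ(t)) = f(γ(t₀)) + (t − t₀)`. -/
theorem gradient_flow_of_eikonal_is_line {n : ℕ} (hn : 1 ≤ n)
    (U : Set (EuclideanSpace ℝ (Fin n))) (hUopen : IsOpen U)
    (f : EuclideanSpace ℝ (Fin n) → ℝ) (hf : ContDiffOn ℝ 2 f U)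
    (heik : ∀ x ∈ U, ‖gradient f x‖ = 1)
    (a b : ℝ) (γ : ℝ → EuclideanSpace ℝ (Fin n))
    (hγU : ∀ t ∈ Set.Ioo a b, γ t ∈ U)
    (hγ : ∀ t ∈ Set.Ioo a b, HasDerivAt γ (gradient f (γ t)) t) :
    (∀ t ∈ Set.Ioo a b, HasDerivAt (deriv γ) 0 t) ∧
    (∀ t₀ ∈ Set.Ioo a b, ∀ t ∈ Set.Ioo a b,
      γ t = γ t₀ + (t - t₀) • gradient f (γ t₀) ∧
      f (γ t) = f (γ t₀) + (t - t₀)) :=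
  gradient_flow_of_eikonal_is_line_general U hUopen f hf heik a b γ hγU hγ
end

section
/- Let n ≥ 1 and let f : ℝⁿ → ℝ be a C² function with ‖∇f(x)‖ = 1 for all x ∈ ℝⁿ. Then for every x ∈ ℝⁿ and every t ∈ ℝ: ∇f(x + t·∇f(x)) = ∇f(x) and f(x + t·∇f(x)) = f(x) + t. -/
/-!
Differentiating `‖∇f‖² = c²` gives `⟪∇f y, ∇²f(y) u⟫ = 0` for all `u`, so by symmetry of the
Hessian `∇²f(y) (∇f y) = 0`. Along the line `γ s = x + s • v` with `v = ∇f x`, the defect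
`φ s = ∇f (γ s) - v` therefore satisfies the linear equation `φ' = ∇²f(γ) v = -∇²f(γ) φ` with
`φ 0 = 0`, and Grönwall's inequality forces `φ ≡ 0`. Then `(f ∘ γ)' = ⟪v, v⟫ = 1`.
-/

open InnerProductSpace Set
open scoped RealInnerProductSpace

theorem eq_zero_of_norm_deriv_le_mul_norm_of_le {F : Type*} [NormedAddCommGroup F]
    [NormedSpace ℝ F] {φ φ' : ℝ → F} {K : ℝ → ℝ} (hK : Continuous K)
    (hφ : ∀ s, HasDerivAt φ (φ' s) s) (bound : ∀ s, ‖φ' s‖ ≤ K s * ‖φ s‖) {a : ℝ} (ha : φ a = 0)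
    {t : ℝ} (ht : a ≤ t) : φ t = 0 := by
  obtain ⟨C, hC⟩ := (isCompact_Icc (a := a) (b := t)).bddAbove_image hK.continuousOn
  refine eq_zero_of_abs_deriv_le_mul_abs_self_of_eq_zero_right (K := C)
    (fun s _ => (hφ s).continuousAt.continuousWithinAt) (fun s _ => (hφ s).hasDerivWithinAt) ha
    (fun s hs => ?_) t (right_mem_Icc.2 ht)
  exact (bound s).trans (mul_le_mul_of_nonneg_right (hC ⟨s, Ico_subset_Icc_self hs, rfl⟩)
    (norm_nonneg _))

theorem eq_zero_of_norm_deriv_le_mul_norm {F : Type*} [NormedAddCommGroup F]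
    [NormedSpace ℝ F] {φ φ' : ℝ → F} {K : ℝ → ℝ} (hK : Continuous K)
    (hφ : ∀ s, HasDerivAt φ (φ' s) s) (bound : ∀ s, ‖φ' s‖ ≤ K s * ‖φ s‖) {a : ℝ} (ha : φ a = 0)
    (t : ℝ) : φ t = 0 := by
  rcases le_total a t with ht | ht
  · exact eq_zero_of_norm_deriv_le_mul_norm_of_le hK hφ bound ha ht
  · have hφneg (s : ℝ) : HasDerivAt (fun s => φ (-s)) (-φ' (-s)) s := by
      simpa [Function.comp_def] using (hφ (-s)).scomp s (hasDerivAt_neg s)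
    simpa using eq_zero_of_norm_deriv_le_mul_norm_of_le (hK.comp continuous_neg)
      hφneg (fun s => by simpa using bound (-s)) (a := -a) (by simpa using ha) (neg_le_neg ht)

theorem hasDerivAt_line {V : Type*} [NormedAddCommGroup V] [NormedSpace ℝ V] (x v : V) (s : ℝ) :
    HasDerivAt (fun s : ℝ => x + s • v) v s := by
  simpa using ((hasDerivAt_id s).smul_const v).const_add x

section

variable {E : Type*} [NormedAddCommGroup E] [InnerProductSpace ℝ E] [CompleteSpace E]
  {f : E → ℝ}

theorem gradient_eq_toDual_symm_comp_fderiv : gradient f = (toDual ℝ E).symm ∘ fderiv ℝ f := rfl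

theorem ContDiff.gradient {n : WithTop ℕ∞} (hf : ContDiff ℝ (n + 1) f) :
    ContDiff ℝ n (gradient f) :=
  (toDual ℝ E).symm.contDiff.comp (hf.fderiv_right le_rfl)

theorem inner_fderiv_gradient_apply (y u w : E) :
    ⟪fderiv ℝ (gradient f) y u, w⟫ = fderiv ℝ (fderiv ℝ f) y u w := by
  rw [gradient_eq_toDual_symm_comp_fderiv, LinearIsometryEquiv.comp_fderiv]
  exact toDual_symm_apply

theorem IsSymmSndFDerivAt.isSymmetric_fderiv_gradient {y : E} (h : IsSymmSndFDerivAt ℝ f y) :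
    (fderiv ℝ (gradient f) y : E →ₗ[ℝ] E).IsSymmetric := fun u w => by
  rw [ContinuousLinearMap.coe_coe, inner_fderiv_gradient_apply, h, real_inner_comm,
    inner_fderiv_gradient_apply]

theorem fderiv_gradient_apply_gradient_eq_zero (hf : ContDiff ℝ 2 f) {c : ℝ}
    (hc : ∀ z, ‖gradient f z‖ = c) (y : E) :
    fderiv ℝ (gradient f) y (gradient f y) = 0 := by
  have hgrad : HasFDerivAt (gradient f) (fderiv ℝ (gradient f) y) y :=
    ((hf.gradient (n := 1)).differentiable one_ne_zero y).hasFDerivAt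
  have hconst : HasFDerivAt (‖gradient f ·‖ ^ 2) (0 : E →L[ℝ] ℝ) y := by
    simpa only [hc] using hasFDerivAt_const (c ^ 2) y
  have horth : ∀ u, ⟪gradient f y, fderiv ℝ (gradient f) y u⟫ = 0 := fun u => by
    simpa using DFunLike.congr_fun (hgrad.norm_sq.unique hconst) u
  have hsymm :=
    (hf.contDiffAt (x := y) |>.isSymmSndFDerivAt (by simp)).isSymmetric_fderiv_gradient
  rw [← inner_self_eq_zero (𝕜 := ℝ)]
  exact (hsymm _ _).trans (horth _)

theorem gradient_add_smul_gradient (hf : ContDiff ℝ 2 f) {c : ℝ}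
    (hc : ∀ z, ‖gradient f z‖ = c) (x : E) (t : ℝ) :
    gradient f (x + t • gradient f x) = gradient f x := by
  set v := gradient f x
  have hgrad : ContDiff ℝ 1 (gradient f) := hf.gradient
  set D := fun s : ℝ => fderiv ℝ (gradient f) (x + s • v)
  have hφ (s : ℝ) : HasDerivAt (fun s => gradient f (x + s • v) - v) (D s v) s :=
    ((hgrad.differentiable one_ne_zero _).hasFDerivAt.comp_hasDerivAt s
      (hasDerivAt_line x v s)).sub_const v
  have hD : Continuous fun s => ‖D s‖ :=
    ((hgrad.continuous_fderiv one_ne_zero).comp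
      (continuous_const.add (continuous_id.smul continuous_const))).norm
  have bound (s : ℝ) : ‖D s v‖ ≤ ‖D s‖ * ‖gradient f (x + s • v) - v‖ := by
    have hDv : D s v = -D s (gradient f (x + s • v) - v) := by
      rw [map_sub, fderiv_gradient_apply_gradient_eq_zero hf hc, zero_sub, neg_neg]
    rw [hDv, norm_neg]
    exact (D s).le_opNorm _
  exact sub_eq_zero.1 <| eq_zero_of_norm_deriv_le_mul_norm hD hφ bound (a := 0) (by simp [v]) t

theorem apply_add_smul_of_gradient_eq (hf : Differentiable ℝ f) {x v w : E}
    (h : ∀ s : ℝ, gradient f (x + s • v) = w) (t : ℝ) : f (x + t • v) = f x + t * ⟪w, v⟫ := by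
  have hψ (s : ℝ) : HasDerivAt (fun s : ℝ => f (x + s • v) - s * ⟪w, v⟫) 0 s := by
    have hline := (hf _).hasFDerivAt.comp_hasDerivAt s (hasDerivAt_line x v s)
    rw [← inner_gradient_left, h] at hline
    simpa using hline.fun_sub ((hasDerivAt_id s).mul_const ⟪w, v⟫)
  have hconst :=
    is_const_of_deriv_eq_zero (fun s => (hψ s).differentiableAt) (fun s => (hψ s).deriv) t 0
  simp only [zero_smul, add_zero, zero_mul, sub_zero] at hconst
  linarith

end

theorem eikonal_gradient_line_general {n : ℕ}
    (f : EuclideanSpace ℝ (Fin n) → ℝ) (hf : ContDiff ℝ 2 f)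
    (heik : ∀ x : EuclideanSpace ℝ (Fin n), ‖gradient f x‖ = 1) :
    ∀ (x : EuclideanSpace ℝ (Fin n)) (t : ℝ),
      gradient f (x + t • gradient f x) = gradient f x ∧
      f (x + t • gradient f x) = f x + t := by
  intro x t
  have hline (s : ℝ) := gradient_add_smul_gradient hf heik x s
  refine ⟨hline t, ?_⟩
  rw [apply_add_smul_of_gradient_eq (hf.differentiable two_ne_zero) hline,
    real_inner_self_eq_norm_sq, heik, one_pow, mul_one]

/-- For a C² unit eikonal function `f : ℝⁿ → ℝ` (`‖∇f‖ ≡ 1`), along the straight line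
`t ↦ x + t·∇f(x)` the gradient is constant and `f` increases linearly:
`∇f(x + t·∇f(x)) = ∇f(x)` and `f(x + t·∇f(x)) = f(x) + t`. -/
theorem eikonal_gradient_line {n : ℕ} (hn : 1 ≤ n)
    (f : EuclideanSpace ℝ (Fin n) → ℝ) (hf : ContDiff ℝ 2 f)
    (heik : ∀ x : EuclideanSpace ℝ (Fin n), ‖gradient f x‖ = 1) :
    ∀ (x : EuclideanSpace ℝ (Fin n)) (t : ℝ),
      gradient f (x + t • gradient f x) = gradient f x ∧
      f (x + t • gradient f x) = f x + t :=
  eikonal_gradient_line_general f hf heik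
end
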